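/- Let φ : ℂ × ℂ → GL_n(ℂ) satisfy φ(μ+λ, z) = φ(μ, e^λ z)φ(λ, z) and φ(0,z)=I, let M(z) = φ(2πi,z) with Jordan–Chevalley decomposition M(z) = M_s(z)M_u(z), and let σ(λ,z) = exp(−(λ/2πi) log M_u(e^λ z)). Then the deformed map ψ(λ, z) := σ(λ, z)·φ(λ, z) again satisfies the cocycle identity ψ(μ+λ,z) = ψ(μ, e^λ z)ψ(λ, z), and its monodromy ψ(2πi, z) = M_s(z) is semisimple for every z. -/

import Mathlib

open Matrix

abbrev Mat (n : ℕ) := Matrix (Fin n) (Fin n) ℂ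

/-- `S` is diagonalizable over `ℂ`. -/
def IsDiagonalizable {n : ℕ} (S : Mat n) : Prop :=
  ∃ (P : Mat n) (d : Fin n → ℂ), IsUnit P ∧ S = P * Matrix.diagonal d * P⁻¹

/-- The (finite) logarithm series of a unipotent matrix. -/
noncomputable def unipLog {n : ℕ} (U : Mat n) : Mat n :=
  ∑ k ∈ Finset.Icc 1 n, ((-1 : ℂ) ^ (k + 1) / (k : ℂ)) • (U - 1) ^ k

/-- The untwisting cocycle `σ(λ, z) = exp(−(λ/2πi) log M_u(e^λ z))`. -/
noncomputable def untwist {n : ℕ} (Mu : ℂ → Mat n) (l z : ℂ) : Mat n :=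
  NormedSpace.exp
    ((-(l / (2 * Real.pi * Complex.I))) • unipLog (Mu (Complex.exp l * z)))

/-!
Since `e^{2πi} = 1`, the cocycle identity applied to `2πi + λ = λ + 2πi` gives
`φ(λ, z) M(z) = M(e^λ z) φ(λ, z)`. Uniqueness of the multiplicative Jordan–Chevalley
decomposition then makes `M_u` equivariant, `M_u(e^λ z) = φ(λ, z) M_u(z) φ(λ, z)⁻¹`, so
`log M_u(e^μ e^λ z)` is the `φ(μ, e^λ z)`-conjugate of `log M_u(e^λ z)`; as `σ` is the
exponential of a multiple of it, linear in the time parameter, `σ(μ + λ, z)` splits as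
`σ(μ, e^λ z) · φ(μ, e^λ z) σ(λ, z) φ(μ, e^λ z)⁻¹`, which is the cocycle identity for `σφ`.
At `λ = 2πi` we get `σ = exp(-log M_u) = M_u⁻¹`, hence `σφ = M_u⁻¹ M_s M_u = M_s`.

The identity `exp (log U) = U` for unipotent `U` reduces, by evaluating polynomials at
`U - 1`, to the congruence `E_m(L_m(X)) ≡ 1 + X mod X^m` between the truncated exponential and
logarithm series. Both sides solve `(1 + X) h' = h` modulo `X^(m-1)` with the same constant term,
and this equation determines the coefficients of `h` below `X^m`.
-/

open Polynomial Finset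

namespace Polynomial

variable (K : Type*) [Field K]

noncomputable def expTrunc (m : ℕ) : K[X] :=
  ∑ j ∈ range m, C (j.factorial : K)⁻¹ * X ^ j

noncomputable def logTrunc (m : ℕ) : K[X] :=
  ∑ k ∈ Icc 1 m, C ((-1) ^ (k + 1) / k : K) * X ^ k

variable {K}

theorem expTrunc_succ (m : ℕ) :
    expTrunc K (m + 1) = expTrunc K m + C (m.factorial : K)⁻¹ * X ^ m :=
  sum_range_succ _ _

theorem eval_zero_expTrunc_succ (m : ℕ) : (expTrunc K (m + 1)).eval 0 = 1 := by
  simp [expTrunc, eval_finsetSum, sum_range_succ']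

theorem derivative_expTrunc_succ [CharZero K] (m : ℕ) :
    derivative (expTrunc K (m + 1)) = expTrunc K m := by
  rw [expTrunc, sum_range_succ', expTrunc]
  simp only [derivative_add, derivative_sum, derivative_C_mul_X_pow, derivative_C, pow_zero,
    mul_one, add_zero, add_tsub_cancel_right]
  refine sum_congr rfl fun j _ => ?_
  rw [Nat.factorial_succ]
  congr 2
  push_cast
  field_simp

theorem X_dvd_logTrunc (m : ℕ) : X ∣ logTrunc K m :=
  dvd_sum fun k hk => dvd_mul_of_dvd_right (dvd_pow_self X (by grind)) _

theorem one_add_X_mul_derivative_logTrunc [CharZero K] (m : ℕ) :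
    (1 + X) * derivative (logTrunc K m) = 1 - (-X) ^ m := by
  induction m with
  | zero => simp [logTrunc]
  | succ m ih =>
    rw [logTrunc, sum_Icc_succ_top (by omega), ← logTrunc, derivative_add, mul_add, ih,
      derivative_C_mul_X_pow, add_tsub_cancel_right]
    have : ((-1) ^ (m + 1 + 1) / ↑(m + 1) * ↑(m + 1) : K) = (-1) ^ m := by
      field_simp
      ring
    rw [this, C_pow, C_neg, C_1]
    ring

/-- The coefficient of `X ^ d` in `(1 + X) * h' - h` is `(d + 1) * h_{d+1} + (d - 1) * h_d`. -/
theorem X_pow_succ_dvd_of_X_pow_dvd_one_add_X_mul_derivative_sub [CharZero K] {h : K[X]}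
    {m : ℕ} (h0 : h.coeff 0 = 0) (hdvd : X ^ m ∣ (1 + X) * derivative h - h) :
    X ^ (m + 1) ∣ h := by
  rw [X_pow_dvd_iff] at hdvd ⊢
  intro d hd
  induction d with
  | zero => exact h0
  | succ d ih =>
    have hd' := hdvd d (by omega)
    have hcoeff := ih (by omega)
    rcases d with _ | d
    · simpa [add_mul, coeff_derivative, hcoeff] using hd'
    · simp [add_mul, coeff_derivative, hcoeff, coeff_X_mul] at hd'
      exact hd'.resolve_right (by norm_cast)

theorem X_pow_dvd_expTrunc_comp_logTrunc_sub [CharZero K] (m : ℕ) :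
    X ^ m ∣ (expTrunc K m).comp (logTrunc K m) - (1 + X) := by
  rcases m with _ | m
  · simp
  set ℓ := logTrunc K (m + 1)
  apply X_pow_succ_dvd_of_X_pow_dvd_one_add_X_mul_derivative_sub
  · have hℓ : ℓ.eval 0 = 0 := by
      obtain ⟨q, hq⟩ := X_dvd_logTrunc (K := K) (m + 1)
      simp [ℓ, hq]
    simp [coeff_zero_eq_eval_zero, eval_comp, hℓ, eval_zero_expTrunc_succ]
  · have hdiff : (1 + X) * derivative ((expTrunc K (m + 1)).comp ℓ - (1 + X)) -
        ((expTrunc K (m + 1)).comp ℓ - (1 + X)) =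
        -((-X) ^ (m + 1) * (expTrunc K m).comp ℓ) - C (m.factorial : K)⁻¹ * ℓ ^ m := by
      rw [derivative_sub, derivative_comp, derivative_expTrunc_succ, expTrunc_succ, add_comp,
        mul_comp, C_comp, X_pow_comp, derivative_add, derivative_one, derivative_X]
      linear_combination
        (expTrunc K m).comp ℓ * one_add_X_mul_derivative_logTrunc (K := K) (m + 1)
    rw [hdiff]
    refine dvd_sub (dvd_neg.mpr (dvd_mul_of_dvd_left ?_ _)) (dvd_mul_of_dvd_right ?_ _)
    · rw [neg_pow]
      exact dvd_mul_of_dvd_right (pow_dvd_pow X m.le_succ) _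
    · exact pow_dvd_pow_of_dvd (X_dvd_logTrunc _) _

end Polynomial

theorem NormedSpace.exp_eq_sum_range_of_pow_eq_zero (𝕂 : Type*) {𝔸 : Type*} [Field 𝕂]
    [CharZero 𝕂] [Ring 𝔸] [Algebra 𝕂 𝔸] [TopologicalSpace 𝔸] [IsTopologicalRing 𝔸]
    {x : 𝔸} {m : ℕ} (hx : x ^ m = 0) :
    NormedSpace.exp x = ∑ j ∈ range m, (j.factorial : 𝕂)⁻¹ • x ^ j := by
  rw [NormedSpace.exp_eq_tsum 𝕂]
  refine tsum_eq_sum fun j hj => ?_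
  rw [pow_eq_zero_of_le (by simpa using hj) hx, smul_zero]

theorem Polynomial.aeval_eq_zero_of_X_pow_dvd {R A : Type*} [CommSemiring R] [Semiring A]
    [Algebra R A] {x : A} {m : ℕ} (hx : x ^ m = 0) {p : R[X]} (hp : X ^ m ∣ p) :
    aeval x p = 0 := by
  obtain ⟨q, rfl⟩ := hp
  rw [map_mul, map_pow, aeval_X, hx, zero_mul]

theorem NormedSpace.exp_aeval_logTrunc {𝕂 𝔸 : Type*} [Field 𝕂] [CharZero 𝕂] [Ring 𝔸]
    [Algebra 𝕂 𝔸] [TopologicalSpace 𝔸] [IsTopologicalRing 𝔸] {x : 𝔸} {m : ℕ} (hx : x ^ m = 0) :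
    NormedSpace.exp (aeval x (logTrunc 𝕂 m)) = 1 + x := by
  have hlog : (aeval x (logTrunc 𝕂 m)) ^ m = 0 := by
    rw [← map_pow]
    exact aeval_eq_zero_of_X_pow_dvd hx (pow_dvd_pow_of_dvd (X_dvd_logTrunc m) m)
  have hcomp : aeval x ((expTrunc 𝕂 m).comp (logTrunc 𝕂 m)) = 1 + x := by
    simpa [sub_eq_zero] using
      aeval_eq_zero_of_X_pow_dvd hx (X_pow_dvd_expTrunc_comp_logTrunc_sub m)
  rw [exp_eq_sum_range_of_pow_eq_zero 𝕂 hlog, ← hcomp, aeval_comp]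
  simp [expTrunc, Algebra.smul_def]

section

variable {n : ℕ}

theorem unipLog_eq_aeval (U : Mat n) : unipLog U = aeval (U - 1) (logTrunc ℂ n) := by
  simp [unipLog, logTrunc, Algebra.smul_def]

theorem exp_unipLog {U : Mat n} (hU : (U - 1) ^ n = 0) : NormedSpace.exp (unipLog U) = U := by
  rw [unipLog_eq_aeval, NormedSpace.exp_aeval_logTrunc hU, add_sub_cancel]

theorem map_unipLog {F : Type*} [FunLike F (Mat n) (Mat n)] [AlgHomClass F ℂ (Mat n) (Mat n)]
    (f : F) (U : Mat n) : unipLog (f U) = f (unipLog U) := by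
  rw [unipLog_eq_aeval, unipLog_eq_aeval, ← aeval_algHom_apply, map_sub, map_one]

noncomputable def unitConj {P : Mat n} (hP : IsUnit P) : Mat n ≃ₐ[ℂ] Mat n :=
  MulSemiringAction.toAlgEquiv ℂ (Mat n) (ConjAct.toConjAct hP.unit)

theorem unitConj_apply {P : Mat n} (hP : IsUnit P) (A : Mat n) :
    unitConj hP A = P * A * P⁻¹ := by
  show ↑hP.unit * A * ↑hP.unit⁻¹ = _
  rw [coe_units_inv, hP.unit_spec]

theorem IsDiagonalizable.conj {P S : Mat n} (hP : IsUnit P) (hS : IsDiagonalizable S) :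
    IsDiagonalizable (P * S * P⁻¹) := by
  obtain ⟨Q, d, hQ, rfl⟩ := hS
  exact ⟨P * Q, d, hP.mul hQ, by simp only [Matrix.mul_inv_rev, Matrix.mul_assoc]⟩

theorem IsDiagonalizable.isSemisimple {S : Mat n} (hS : IsDiagonalizable S) :
    Module.End.IsSemisimple (toLinAlgEquiv' S) := by
  classical
  obtain ⟨P, d, hP, rfl⟩ := hS
  set p : ℂ[X] := ∏ c ∈ univ.image d, (X - C c)
  have hp : Squarefree p :=
    (separable_prod_X_sub_C_iff'.mpr fun _ _ _ _ h => h).squarefree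
  have hd : aeval (diagonal d) p = 0 := by
    have hroots : (fun j => aeval (d j) p) = 0 := by
      funext j
      simp [p, prod_eq_zero_iff, sub_eq_zero]
    rw [← diagonalAlgHom_apply ℂ, aeval_algHom_apply, aeval_pi_apply, hroots, map_zero]
  refine Module.End.isSemisimple_of_squarefree_aeval_eq_zero hp ?_
  rw [aeval_algHom_apply, ← unitConj_apply hP, aeval_algHom_apply, hd, map_zero, map_zero]

theorem jordanChevalley_mul_unique {S₁ U₁ S₂ U₂ : Mat n}
    (hS₁ : IsDiagonalizable S₁) (hS₂ : IsDiagonalizable S₂)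
    (hU₁ : IsNilpotent (U₁ - 1)) (hU₂ : IsNilpotent (U₂ - 1))
    (hc₁ : Commute S₁ U₁) (hc₂ : Commute S₂ U₂) (hM : IsUnit (S₁ * U₁))
    (h : S₁ * U₁ = S₂ * U₂) : S₁ = S₂ ∧ U₁ = U₂ := by
  let e : Mat n ≃ₐ[ℂ] Module.End ℂ (Fin n → ℂ) := toLinAlgEquiv'
  have hsplit (S U : Mat n) : e (S * U) = e (S * (U - 1)) + e S := by
    rw [← map_add, mul_sub, mul_one, sub_add_cancel]
  have hnil {S U : Mat n} (hU : IsNilpotent (U - 1)) (hc : Commute S U) :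
      IsNilpotent (e (S * (U - 1))) :=
    ((hc.sub_right (Commute.one_right S)).isNilpotent_mul_left hU).map e
  have hcomm {S U : Mat n} (hc : Commute S U) : Commute (e (S * (U - 1))) (e S) :=
    ((Commute.refl S).mul_left (hc.sub_right (Commute.one_right S)).symm).map e
  obtain ⟨-, hS⟩ := Module.End.isNilpotent_isSemisimple_unique (hnil hU₁ hc₁)
    hS₁.isSemisimple (hnil hU₂ hc₂) hS₂.isSemisimple (hcomm hc₁) (hcomm hc₂)
    (by rw [← hsplit, ← hsplit, h])
  have hS : S₁ = S₂ := e.injective hS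
  subst hS
  exact ⟨rfl, (isUnit_of_mul_isUnit_left hM).mul_left_cancel h⟩

theorem jordanChevalley_conj {P S U S' U' : Mat n} (hP : IsUnit P)
    (hS : IsDiagonalizable S) (hS' : IsDiagonalizable S')
    (hU : IsNilpotent (U - 1)) (hU' : IsNilpotent (U' - 1))
    (hc : Commute S U) (hc' : Commute S' U') (hM' : IsUnit (S' * U'))
    (h : P * (S * U) = S' * U' * P) : S' = P * S * P⁻¹ ∧ U' = P * U * P⁻¹ := by
  have hM : S' * U' = unitConj hP S * unitConj hP U := by
    rw [← map_mul, unitConj_apply, h,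
      mul_nonsing_inv_cancel_right _ _ ((isUnit_iff_isUnit_det P).mp hP)]
  simp only [← unitConj_apply hP]
  exact jordanChevalley_mul_unique hS' (by rw [unitConj_apply]; exact hS.conj hP) hU'
    (by simpa using hU.map (unitConj hP)) hc' (hc.map _) hM' hM

open Complex in
theorem untwist_add (Mu : ℂ → Mat n) {P : Mat n} (hP : IsUnit P) {μ l z : ℂ}
    (hMu : Mu (exp μ * (exp l * z)) = P * Mu (exp l * z) * P⁻¹) :
    untwist Mu (μ + l) z = untwist Mu μ (exp l * z) * (P * untwist Mu l z * P⁻¹) := by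
  simp only [untwist]
  rw [exp_add, mul_assoc (exp μ), hMu, ← Matrix.exp_conj _ _ hP]
  simp only [← unitConj_apply hP, map_unipLog, map_smul]
  rw [← Matrix.exp_add_of_commute _ _ (((Commute.refl _).smul_left _).smul_right _), ← add_smul,
    add_div, neg_add]

theorem untwist_two_pi_I (Mu : ℂ → Mat n) {z : ℂ} (hu : (Mu z - 1) ^ n = 0) :
    untwist Mu (2 * Real.pi * Complex.I) z = (Mu z)⁻¹ := by
  have hτ : (2 * Real.pi * Complex.I : ℂ) ≠ 0 := by simp [Real.pi_ne_zero, Complex.I_ne_zero]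
  rw [untwist, Complex.exp_two_pi_mul_I, one_mul, div_self hτ, neg_smul, one_smul, Matrix.exp_neg,
    exp_unipLog hu]

section Cocycle

variable {φ : ℂ → ℂ → Mat n}

theorem isUnit_of_cocycle
    (hcoc : ∀ μ l z : ℂ, φ (μ + l) z = φ μ (Complex.exp l * z) * φ l z)
    (hid : ∀ z : ℂ, φ 0 z = 1) (l z : ℂ) : IsUnit (φ l z) :=
  IsUnit.of_mul_eq_one_right _ (by rw [← hcoc, neg_add_cancel, hid])

theorem cocycle_mul_monodromy
    (hcoc : ∀ μ l z : ℂ, φ (μ + l) z = φ μ (Complex.exp l * z) * φ l z) (l z : ℂ) :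
    φ l z * φ (2 * Real.pi * Complex.I) z =
      φ (2 * Real.pi * Complex.I) (Complex.exp l * z) * φ l z := by
  have h := hcoc l (2 * Real.pi * Complex.I) z
  rw [Complex.exp_two_pi_mul_I, one_mul] at h
  rw [← h, add_comm, hcoc]

end Cocycle

end

/-- Twisting a representation of `ℂ ⋉ 𝔸` by the untwisting cocycle `σ` yields a new
representation `ψ = σ · φ` whose monodromy `ψ(2πi, z) = M_s(z)` is semisimple. -/
theorem jordan_chevalley_of_representation {n : ℕ} (φ : ℂ → ℂ → Mat n)
    (Ms Mu : ℂ → Mat n)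
    (hcoc : ∀ μ l z : ℂ, φ (μ + l) z = φ μ (Complex.exp l * z) * φ l z)
    (hid : ∀ z : ℂ, φ 0 z = 1)
    (hs : ∀ z : ℂ, IsDiagonalizable (Ms z))
    (hu : ∀ z : ℂ, (Mu z - 1) ^ n = 0)
    (hc : ∀ z : ℂ, Commute (Ms z) (Mu z))
    (hM : ∀ z : ℂ, φ (2 * Real.pi * Complex.I) z = Ms z * Mu z) :
    (∀ μ l z : ℂ,
      untwist Mu (μ + l) z * φ (μ + l) z =
        (untwist Mu μ (Complex.exp l * z) * φ μ (Complex.exp l * z)) *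
          (untwist Mu l z * φ l z)) ∧
    (∀ z : ℂ,
      untwist Mu (2 * Real.pi * Complex.I) z * φ (2 * Real.pi * Complex.I) z = Ms z ∧
      IsDiagonalizable
        (untwist Mu (2 * Real.pi * Complex.I) z * φ (2 * Real.pi * Complex.I) z)) := by
  have hunit := isUnit_of_cocycle hcoc hid
  have hMu (l z : ℂ) : Mu (Complex.exp l * z) = φ l z * Mu z * (φ l z)⁻¹ :=
    (jordanChevalley_conj (hunit l z) (hs z) (hs _) ⟨n, hu z⟩ ⟨n, hu _⟩ (hc z) (hc _)
      (hM _ ▸ hunit _ _) (by rw [← hM, ← hM, cocycle_mul_monodromy hcoc])).2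
  have hmonodromy (z : ℂ) :
      untwist Mu (2 * Real.pi * Complex.I) z * φ (2 * Real.pi * Complex.I) z = Ms z := by
    have hdet : IsUnit (Mu z).det := by
      rw [← isUnit_iff_isUnit_det, ← exp_unipLog (hu z)]
      exact Matrix.isUnit_exp _
    rw [hM, untwist_two_pi_I Mu (hu z), (hc z).eq, nonsing_inv_mul_cancel_left _ _ hdet]
  refine ⟨fun μ l z => ?_, fun z => ⟨hmonodromy z, hmonodromy z ▸ hs z⟩⟩
  have hdet : IsUnit (φ μ (Complex.exp l * z)).det :=
    (isUnit_iff_isUnit_det _).mp (hunit _ _)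
  rw [untwist_add Mu (hunit μ _) (hMu μ _), hcoc μ l z]
  simp only [Matrix.mul_assoc, nonsing_inv_mul_cancel_left _ _ hdet]
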